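/- arXiv:2307.06160 — 5 statements merged into one kernel-verified Lean document; each statement's English description precedes it below -/
import Mathlib

section
/- Let V be an (n+1)-dimensional vector space over an algebraically closed field k of characteristic p containing F_{q^2}, and let β be a nonzero q-bic form on V. For 0 ≤ r < n/2, the Fano scheme F of (r+1)-dimensional isotropic subspaces of (V, β) is nonempty; equivalently, there exists an (r+1)-dimensional subspace U ⊆ V with β(u, u') = 0 for all u, u' ∈ U. -/
/-!
Induct on the dimension of the isotropic subspace. The inductive step needs an isotropic `w ≠ 0`
whose two-sided orthogonal `{u | β w u = 0 ∧ β u w = 0}` has codimension at most one: a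
complement of `w` inside it has codimension at most two in `V`, and adjoining `w` to an
isotropic subspace of that complement keeps it isotropic.

A vector in the left or right radical of `β` is such a `w`. If `β` is nondegenerate, untwisting
`u ↦ β u v` by the inverse Frobenius identifies `V` semilinearly with its dual, which turns
`v ↦ β v ·` into a `q²`-semilinear endomorphism `T` of `V`; an eigenvector `v` of `T` has equal
left and right orthogonals. If `v` is isotropic it is the required `w`; otherwise `V` is the
orthogonal sum of `k v` and `v^⊥`, and we recurse into `v^⊥`, down to dimension two, where an
isotropic vector is a root of a polynomial of degree `q + 1`.

Semilinear endomorphisms have eigenvectors over an algebraically closed field: on a cyclic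
chain `v, T v, …, T^[n] v` the eigenvector equation reduces to one polynomial equation.
-/

open Module Polynomial Finset Submodule

universe u v

theorem ne_zero_of_map_eq_pow {k : Type u} [Field k] {σ : k →+* k} {q : ℕ}
    (hσ : ∀ c, σ c = c ^ q) : q ≠ 0 := by
  rintro rfl
  simpa using hσ 0

section EigenCoeffs

variable {k : Type u} [Field k]

/-- For `s ≠ 0`, the values `c i = (eigenCoeffPoly Q b i).eval s` solve the recursion
`μ c₀ = b₀`, `μ cᵢ₊₁ = cᵢ ^ Q + bᵢ₊₁` with `μ = s⁻¹`. -/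
noncomputable def eigenCoeffPoly (Q : ℕ) (b : ℕ → k) : ℕ → k[X]
  | 0 => X * C (b 0)
  | i + 1 => X * (eigenCoeffPoly Q b i ^ Q + C (b (i + 1)))

theorem natDegree_eigenCoeffPoly_pos {Q : ℕ} (hQ : Q ≠ 0) {b : ℕ → k} (hb : b 0 ≠ 0) (i : ℕ) :
    0 < (eigenCoeffPoly Q b i).natDegree := by
  induction i with
  | zero => simp [eigenCoeffPoly, hb]
  | succ i ih =>
    have h : 0 < (eigenCoeffPoly Q b i ^ Q + C (b (i + 1))).natDegree := by
      rw [natDegree_add_C, natDegree_pow]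
      positivity
    rw [eigenCoeffPoly, natDegree_X_mul (ne_zero_of_natDegree_gt h)]
    omega

theorem eval_zero_eigenCoeffPoly (Q : ℕ) (b : ℕ → k) (i : ℕ) :
    (eigenCoeffPoly Q b i).eval 0 = 0 := by
  cases i <;> simp [eigenCoeffPoly]

theorem exists_eigen_coeffs [IsAlgClosed k] {Q : ℕ} (hQ : Q ≠ 0) (n : ℕ) (b : ℕ → k) :
    ∃ (μ : k) (c : ℕ → k), c n = 1 ∧ μ * c 0 = b 0 ∧
      ∀ i < n, μ * c (i + 1) = c i ^ Q + b (i + 1) := by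
  by_cases hb : b 0 = 0
  · choose r hr using fun i ↦ IsAlgClosed.exists_pow_nat_eq (-b (i + 1)) (Nat.pos_of_ne_zero hQ)
    refine ⟨0, fun i ↦ if i = n then 1 else r i, by simp, by simp [hb], fun i hi ↦ ?_⟩
    simp [hi.ne, hr]
  · set R := eigenCoeffPoly Q b
    have hdeg : (R n - C 1).degree ≠ 0 := by
      refine (natDegree_pos_iff_degree_pos.mp ?_).ne'
      rw [natDegree_sub_C]
      exact natDegree_eigenCoeffPoly_pos hQ hb n
    obtain ⟨s, hs⟩ := IsAlgClosed.exists_root _ hdeg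
    have hs0 : s ≠ 0 := by
      rintro rfl
      simp [R, eval_zero_eigenCoeffPoly] at hs
    refine ⟨s⁻¹, fun i ↦ (R i).eval s, by simpa [sub_eq_zero] using hs, ?_, fun i _ ↦ ?_⟩
    · simp only [R, eigenCoeffPoly, eval_mul, eval_X, eval_C]
      field_simp
    · simp [R, eigenCoeffPoly, hs0]

end EigenCoeffs

section

variable {k : Type u} [Field k] {V : Type v} [AddCommGroup V] [Module k V]

theorem exists_notMem_span_and_succ_mem_span [FiniteDimensional k V] {u : ℕ → V} (h0 : u 0 ≠ 0) :
    ∃ n, u n ∉ span k (u '' ↑(range n)) ∧ u (n + 1) ∈ span k (u '' ↑(range (n + 1))) := by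
  classical
  let S : ℕ →o Submodule k V :=
    ⟨fun m ↦ span k (u '' ↑(range m)), fun m m' h ↦ span_mono (by gcongr)⟩
  obtain ⟨N, hN⟩ := monotone_stabilizes_iff_noetherian.mpr inferInstance S
  have hex : ∃ m, u m ∈ S m := by
    exact ⟨N, (hN (N + 1) N.le_succ).symm ▸ subset_span ⟨N, by simp, rfl⟩⟩
  have hpos : Nat.find hex ≠ 0 := by
    intro h
    have := Nat.find_spec hex
    simp_all [S]
  obtain ⟨n, hn⟩ := Nat.exists_eq_succ_of_ne_zero hpos
  have hsucc := Nat.find_spec hex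
  rw [hn] at hsucc
  exact ⟨n, Nat.find_min hex (by omega), hsucc⟩

theorem map_sum_eq_smul_sum_of_recurrence {Q : ℕ} (T : V →+ V)
    (hT : ∀ (c : k) x, T (c • x) = c ^ Q • T x) {u : ℕ → V} (hu : ∀ i, u (i + 1) = T (u i))
    {n : ℕ} {μ : k} {b c : ℕ → k} (hb : u (n + 1) = ∑ i ∈ range (n + 1), b i • u i)
    (hcn : c n = 1) (hc0 : μ * c 0 = b 0) (hc : ∀ i < n, μ * c (i + 1) = c i ^ Q + b (i + 1)) :
    T (∑ i ∈ range (n + 1), c i • u i) = μ • ∑ i ∈ range (n + 1), c i • u i := by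
  calc T (∑ i ∈ range (n + 1), c i • u i)
      = ∑ i ∈ range n, c i ^ Q • u (i + 1) + ∑ i ∈ range (n + 1), b i • u i := by
        simp only [map_sum, hT, ← hu]
        rw [sum_range_succ, hcn, one_pow, one_smul, hb]
    _ = ∑ i ∈ range n, (μ * c (i + 1)) • u (i + 1) + (μ * c 0) • u 0 := by
        rw [sum_range_succ', ← add_assoc, ← sum_add_distrib, hc0]
        congr 1
        exact sum_congr rfl fun i hi ↦ by rw [hc i (mem_range.mp hi), add_smul]
    _ = μ • ∑ i ∈ range (n + 1), c i • u i := by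
        simp only [sum_range_succ' _ n, smul_add, smul_sum, smul_smul]

theorem exists_eigenvector_of_map_smul_eq_pow_smul [IsAlgClosed k] [FiniteDimensional k V]
    [Nontrivial V] {Q : ℕ} (hQ : Q ≠ 0) (T : V →+ V) (hT : ∀ (c : k) x, T (c • x) = c ^ Q • T x) :
    ∃ w ≠ 0, ∃ μ : k, T w = μ • w := by
  obtain ⟨v, hv⟩ := exists_ne (0 : V)
  set u : ℕ → V := fun i ↦ (⇑T)^[i] v
  have hu : ∀ i, u (i + 1) = T (u i) := fun i ↦ Function.iterate_succ_apply' _ _ _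
  obtain ⟨n, hn, hsucc⟩ := exists_notMem_span_and_succ_mem_span (k := k) (u := u) hv
  obtain ⟨b, hb⟩ := (mem_span_image_finset_iff_exists_fun' k).mp hsucc
  obtain ⟨μ, c, hcn, hc0, hc⟩ := exists_eigen_coeffs hQ n b
  refine ⟨∑ i ∈ range (n + 1), c i • u i, ?_, μ,
    map_sum_eq_smul_sum_of_recurrence T hT hu hb.symm hcn hc0 hc⟩
  rw [sum_range_succ, hcn, one_smul]
  intro h
  refine hn ?_
  rw [eq_neg_of_add_eq_zero_right h]
  exact neg_mem (sum_mem fun i hi ↦ smul_mem _ _ (subset_span ⟨i, hi, rfl⟩))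

theorem Module.Dual.finrank_le_finrank_ker_add_one [FiniteDimensional k V] (f : Dual k V) :
    finrank k V ≤ finrank k (LinearMap.ker f) + 1 := by
  by_cases hf : f = 0
  · rw [hf, LinearMap.ker_zero, finrank_top]
    omega
  · exact (Module.Dual.finrank_ker_add_one_of_ne_zero hf).ge

theorem LinearMap.surjective_of_injective_of_finrank_eq_finrank {W : Type*} [AddCommGroup W]
    [Module k W] [FiniteDimensional k V] [FiniteDimensional k W] {τ : k ≃+* k}
    (f : V →ₛₗ[(τ : k →+* k)] W) (hf : Function.Injective f) (h : finrank k V = finrank k W) :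
    Function.Surjective f := by
  have := RingHomInvPair.of_ringEquiv τ
  have hrank : finrank k V ≤ finrank k (LinearMap.range f) :=
    finrank_le_finrank_of_rank_le_rank
      (lift_rank_le_of_surjective_injective τ (f.rangeRestrict : V →+ LinearMap.range f)
        τ.surjective (fun x y hxy ↦ hf (congr_arg Subtype.val hxy))
        fun c x ↦ f.rangeRestrict.map_smulₛₗ c x)
      (rank_lt_aleph0 k _)
  exact LinearMap.range_eq_top.mp
    (eq_top_of_finrank_eq (le_antisymm (Submodule.finrank_le _) (h ▸ hrank)))

theorem LinearMap.exists_isotropic_vector [IsAlgClosed k] {σ : k →+* k} {q : ℕ}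
    (hσ : ∀ c, σ c = c ^ q) (B : V →ₛₗ[σ] V →ₗ[k] k) (hV : 1 < finrank k V) :
    ∃ v ≠ 0, B v v = 0 := by
  have : Nontrivial V := nontrivial_of_finrank_pos (R := k) (by omega)
  obtain ⟨v, hv⟩ := exists_ne (0 : V)
  obtain ⟨w, hvw⟩ := exists_linearIndependent_pair_of_one_lt_finrank hV hv
  rw [LinearIndependent.pair_iff] at hvw
  by_cases hw : B w w = 0
  · exact ⟨w, fun h ↦ one_ne_zero (hvw 0 1 (by simp [h])).2, hw⟩
  have hq := ne_zero_of_map_eq_pow hσ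
  set P := C (B w w) * X ^ (q + 1) + C (B w v) * X ^ q + C (B v w) * X + C (B v v)
  have hdeg : P.natDegree = q + 1 := by
    simp only [P]
    compute_degree!
    simp [hq, hw]
  obtain ⟨t, ht⟩ :=
    IsAlgClosed.exists_root P (natDegree_pos_iff_degree_pos.mp (by rw [hdeg]; omega)).ne'
  refine ⟨v + t • w, fun h ↦ one_ne_zero (hvw 1 t (by simpa using h)).1, ?_⟩
  simp only [P, IsRoot, eval_add, eval_mul, eval_C, eval_pow, eval_X] at ht
  simp only [map_add, map_smulₛₗ, LinearMap.add_apply, LinearMap.smul_apply, smul_eq_mul, hσ]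
  linear_combination ht

namespace LinearMap

-- A `q`-bic form is such a `B` with `σ c = c ^ q`.
variable {σ : k ≃+* k} (B : V →ₛₗ[(σ : k →+* k)] V →ₗ[k] k)

def rightDual : V →ₛₗ[(σ.symm : k →+* k)] Dual k V where
  toFun v :=
    { toFun := fun u ↦ σ.symm (B u v)
      map_add' := fun x y ↦ by simp
      map_smul' := fun c x ↦ by simp }
  map_add' v w := by ext; simp
  map_smul' c v := by ext; simp

@[simp]
theorem rightDual_apply (v u : V) : B.rightDual v u = σ.symm (B u v) := rfl

theorem ker_rightDual (v : V) : ker (B.rightDual v) = ker (B.flip v) := by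
  ext; simp

def twoSidedOrthogonal (w : V) : Submodule k V := ker (B w) ⊓ ker (B.flip w)

variable {B} in
theorem mem_twoSidedOrthogonal {w u : V} :
    u ∈ B.twoSidedOrthogonal w ↔ B w u = 0 ∧ B u w = 0 := Iff.rfl

variable {B} in
theorem mem_twoSidedOrthogonal_comm {w u : V} :
    u ∈ B.twoSidedOrthogonal w ↔ w ∈ B.twoSidedOrthogonal u := by
  simp only [mem_twoSidedOrthogonal, and_comm]

theorem finrank_le_twoSidedOrthogonal_add_one_of_ker_le [FiniteDimensional k V] {w : V}
    (h : ker (B w) ≤ ker (B.flip w)) : finrank k V ≤ finrank k (B.twoSidedOrthogonal w) + 1 := by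
  rw [twoSidedOrthogonal, inf_eq_left.mpr h]
  exact Module.Dual.finrank_le_finrank_ker_add_one (B w)

theorem finrank_le_twoSidedOrthogonal_add_one_of_ker_flip_le [FiniteDimensional k V] {w : V}
    (h : ker (B.flip w) ≤ ker (B w)) : finrank k V ≤ finrank k (B.twoSidedOrthogonal w) + 1 := by
  rw [twoSidedOrthogonal, inf_eq_right.mpr h, ← ker_rightDual]
  exact (B.rightDual w).finrank_le_finrank_ker_add_one

theorem exists_ker_eq_ker_flip [IsAlgClosed k] [FiniteDimensional k V] [Nontrivial V] {q : ℕ}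
    (hσ : ∀ c, σ c = c ^ q) (hl : ∀ v, B v = 0 → v = 0) (hr : ∀ v, B.flip v = 0 → v = 0) :
    ∃ v ≠ 0, ker (B v) = ker (B.flip v) := by
  have hinj : Function.Injective B.rightDual := (injective_iff_map_eq_zero _).mpr fun v hv ↦
    hr v (by ext u; simpa using congr($hv u))
  let e := AddEquiv.ofBijective B.rightDual
    ⟨hinj, B.rightDual.surjective_of_injective_of_finrank_eq_finrank hinj
      Subspace.dual_finrank_eq.symm⟩
  let T : V →+ V := e.symm.toAddMonoidHom.comp B.toAddMonoidHom
  have hTe : ∀ x, B.rightDual (T x) = B x := fun x ↦ e.apply_symm_apply (B x)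
  have hT : ∀ (c : k) x, T (c • x) = c ^ (q * q) • T x := by
    intro c x
    apply hinj
    rw [hTe, map_smulₛₗ, map_smulₛₗ, hTe, pow_mul, ← hσ, ← hσ]
    simp
  have hq := ne_zero_of_map_eq_pow (σ := (σ : k →+* k)) hσ
  obtain ⟨v, hv, μ, hTv⟩ := exists_eigenvector_of_map_smul_eq_pow_smul (mul_ne_zero hq hq) T hT
  have hBv : B v = σ.symm μ • B.rightDual v := by
    rw [← hTe, hTv, map_smulₛₗ]
    rfl
  have hμ : σ.symm μ ≠ 0 := fun h ↦ hv (hl v (by simp [hBv, h]))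
  exact ⟨v, hv, by rw [hBv, ker_smul _ _ hμ, ker_rightDual]⟩

theorem finrank_twoSidedOrthogonal_domRestrict_add_one_le [FiniteDimensional k V]
    {K : Submodule k V} {v : V} (hv : v ∉ K) (hK : K ≤ B.twoSidedOrthogonal v) (w : K) :
    finrank k ((B.domRestrict₁₂ K K).twoSidedOrthogonal w) + 1 ≤
      finrank k (B.twoSidedOrthogonal w) := by
  set L := (B.domRestrict₁₂ K K).twoSidedOrthogonal w
  have hvL : v ∉ L.map K.subtype := fun h ↦ hv (map_subtype_le K L h)
  rw [← finrank_map_subtype_eq K L, ← finrank_sup_span_singleton hvL]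
  refine finrank_mono (sup_le ?_ ((span_singleton_le_iff_mem _ _).mpr ?_))
  · rintro _ ⟨u, hu, rfl⟩
    exact hu
  · exact mem_twoSidedOrthogonal_comm.mp (hK w.2)

theorem exists_isotropic_finrank_le_twoSidedOrthogonal_add_one [IsAlgClosed k]
    [FiniteDimensional k V] {q : ℕ} (hσ : ∀ c, σ c = c ^ q) (hV : 1 < finrank k V) :
    ∃ w ≠ 0, B w w = 0 ∧ finrank k V ≤ finrank k (B.twoSidedOrthogonal w) + 1 := by
  obtain ⟨n, hn⟩ : ∃ n, finrank k V = n + 2 := ⟨finrank k V - 2, by omega⟩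
  induction n generalizing V with
  | zero =>
    obtain ⟨w, hw, hww⟩ := B.exists_isotropic_vector hσ hV
    have hwL : w ∈ B.twoSidedOrthogonal w := ⟨hww, hww⟩
    have : 1 ≤ finrank k (B.twoSidedOrthogonal w) :=
      one_le_finrank_iff.mpr (Submodule.ne_bot_iff _ |>.mpr ⟨w, hwL, hw⟩)
    exact ⟨w, hw, hww, by omega⟩
  | succ n ih =>
    by_cases hr : ∃ v ≠ 0, B.flip v = 0
    · obtain ⟨v, hv, hBv⟩ := hr
      exact ⟨v, hv, by simpa using congr($hBv v),
        B.finrank_le_twoSidedOrthogonal_add_one_of_ker_le (by simp [hBv])⟩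
    by_cases hl : ∃ v ≠ 0, B v = 0
    · obtain ⟨v, hv, hBv⟩ := hl
      exact ⟨v, hv, by simp [hBv],
        B.finrank_le_twoSidedOrthogonal_add_one_of_ker_flip_le (by simp [hBv])⟩
    push Not at hr hl
    have : Nontrivial V := nontrivial_of_finrank_pos (R := k) (by omega)
    obtain ⟨v, hv, hker⟩ := B.exists_ker_eq_ker_flip hσ
      (fun v h ↦ by_contra fun h' ↦ hl v h' h) (fun v h ↦ by_contra fun h' ↦ hr v h' h)
    by_cases hvv : B v v = 0
    · exact ⟨v, hv, hvv, B.finrank_le_twoSidedOrthogonal_add_one_of_ker_le hker.le⟩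
    have hBv : B v ≠ 0 := fun h ↦ hvv (by simp [h])
    have hK : finrank k (ker (B v)) = n + 2 := by
      have := Module.Dual.finrank_ker_add_one_of_ne_zero hBv
      omega
    obtain ⟨w, hw, hww, hL⟩ := ih (B.domRestrict₁₂ (ker (B v)) (ker (B v))) (by omega) hK
    have := B.finrank_twoSidedOrthogonal_domRestrict_add_one_le (K := ker (B v)) hvv
      (le_inf le_rfl hker.le) w
    exact ⟨w, by simpa using hw, hww, by omega⟩

theorem isotropic_sup_span_singleton {U : Submodule k V} {w : V}
    (hU : ∀ u ∈ U, ∀ u' ∈ U, B u u' = 0) (hUw : U ≤ B.twoSidedOrthogonal w) (hw : B w w = 0) :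
    ∀ u ∈ U ⊔ span k {w}, ∀ u' ∈ U ⊔ span k {w}, B u u' = 0 := by
  simp only [Submodule.mem_sup, mem_span_singleton]
  rintro _ ⟨x, hx, _, ⟨a, rfl⟩, rfl⟩ _ ⟨y, hy, _, ⟨b, rfl⟩, rfl⟩
  have hxw := hUw hx
  have hyw := hUw hy
  rw [mem_twoSidedOrthogonal] at hxw hyw
  simp [hU x hx y hy, hxw, hyw, hw]

theorem exists_isotropic_submodule [IsAlgClosed k] [FiniteDimensional k V] {q : ℕ}
    (hσ : ∀ c, σ c = c ^ q) {m : ℕ} (hm : 2 * m ≤ finrank k V) :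
    ∃ U : Submodule k V, finrank k U = m ∧ ∀ u ∈ U, ∀ u' ∈ U, B u u' = 0 := by
  induction m generalizing V with
  | zero => exact ⟨⊥, finrank_bot k V, by simp⟩
  | succ m ih =>
    obtain ⟨w, hw, hww, hL⟩ :=
      B.exists_isotropic_finrank_le_twoSidedOrthogonal_add_one hσ (by omega)
    obtain ⟨C, hC⟩ := (span k {w}).exists_isCompl
    have hW : 2 * m ≤ finrank k (C ⊓ B.twoSidedOrthogonal w : Submodule k V) := by
      have hCw := finrank_add_eq_of_isCompl hC
      rw [finrank_span_singleton hw] at hCw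
      have := finrank_sup_add_finrank_inf_eq C (B.twoSidedOrthogonal w)
      have := finrank_le (C ⊔ B.twoSidedOrthogonal w)
      omega
    set W := C ⊓ B.twoSidedOrthogonal w
    have hwW : w ∉ W := fun h ↦ hw (disjoint_def.mp hC.disjoint w (mem_span_singleton_self w) h.1)
    obtain ⟨U, hU, hUiso⟩ := ih (B.domRestrict₁₂ W W) hW
    refine ⟨U.map W.subtype ⊔ span k {w}, ?_, B.isotropic_sup_span_singleton ?_ ?_ hww⟩
    · rw [finrank_sup_span_singleton fun h ↦ hwW (map_subtype_le W U h), finrank_map_subtype_eq, hU]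
    · rintro _ ⟨x, hx, rfl⟩ _ ⟨y, hy, rfl⟩
      exact hUiso x hx y hy
    · exact (map_subtype_le W U).trans inf_le_right

end LinearMap

end

theorem stmt_3_general {p q ν n r : ℕ} [Fact p.Prime] (hq : q = p ^ ν)
    {k : Type*} [Field k] [IsAlgClosed k] [CharP k p]
    {V : Type*} [AddCommGroup V] [Module k V] [FiniteDimensional k V]
    (hdim : Module.finrank k V = n + 1) (hr : 2 * r < n)
    (β : V → V → k)
    (haddl : ∀ u v w : V, β (u + v) w = β u w + β v w)
    (haddr : ∀ u v w : V, β u (v + w) = β u v + β u w)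
    (hsmull : ∀ (c : k) (u v : V), β (c • u) v = c ^ q * β u v)
    (hsmulr : ∀ (c : k) (u v : V), β u (c • v) = c * β u v) :
    ∃ U : Submodule k V, Module.finrank k U = r + 1 ∧
      ∀ u ∈ U, ∀ u' ∈ U, β u u' = 0 := by
  subst hq
  let B : V →ₛₗ[(iterateFrobeniusEquiv k p ν : k →+* k)] V →ₗ[k] k :=
    LinearMap.mk₂'ₛₗ _ _ β haddl hsmull haddr hsmulr
  exact B.exists_isotropic_submodule (iterateFrobeniusEquiv_def k p ν) (by omega)

/-- over an algebraically closed field, a nonzero q-bic form on an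
(n+1)-dimensional space admits an (r+1)-dimensional totally isotropic subspace whenever
0 ≤ r < n/2 (nonemptiness of the Fano scheme of r-planes). -/
theorem stmt_3 {p q ν n r : ℕ} [Fact p.Prime] (hν : 0 < ν) (hq : q = p ^ ν)
    {k : Type*} [Field k] [IsAlgClosed k] [CharP k p]
    {V : Type*} [AddCommGroup V] [Module k V] [FiniteDimensional k V]
    (hdim : Module.finrank k V = n + 1) (hr : 2 * r < n)
    (β : V → V → k)
    (haddl : ∀ u v w : V, β (u + v) w = β u w + β v w)
    (haddr : ∀ u v w : V, β u (v + w) = β u v + β u w)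
    (hsmull : ∀ (c : k) (u v : V), β (c • u) v = c ^ q * β u v)
    (hsmulr : ∀ (c : k) (u v : V), β u (c • v) = c * β u v)
    (hβne : ∃ v w : V, β v w ≠ 0) :
    ∃ U : Submodule k V, Module.finrank k U = r + 1 ∧
      ∀ u ∈ U, ∀ u' ∈ U, β u u' = 0 :=
  stmt_3_general hq hdim hr β haddl haddr hsmull hsmulr
end

section
/- Let β be a nonsingular q-bic form on a (2m+2)-dimensional vector space V over an algebraically closed field k ⊇ F_{q^2}. Then there exists an (m+1)-dimensional totally isotropic subspace of V, i.e., the q-bic hypersurface of dimension 2m contains an m-plane. -/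
/-!
Call `v` Hermitian if `β x v = (β v x) ^ q` for all `x`. Nondegeneracy yields an injective
`q²`-semilinear `S` with `β x (S v) = (β v x) ^ q`, whose fixed vectors are the Hermitian ones.
Inside the cyclic subspace spanned by the iterates `S^i v₀`, the fixed-point equation reduces
to one polynomial equation in one unknown, so `k` being algebraically closed gives a Hermitian
vector. Two orthogonal Hermitian vectors `v₁, v₂` that are not isotropic combine into the
isotropic Hermitian vector `a v₁ + v₂`, where `a ^ (q + 1) = -β v₂ v₂ / β v₁ v₁` (this forces
`a ^ (q ^ 2) = a`). For an isotropic Hermitian `v` the left and right orthogonals of `v` agree.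
A complement of `k v` in that orthogonal then carries a nonsingular form of dimension
`dim V - 2`, and induction gives a totally isotropic subspace of half the dimension.
-/

open Module Polynomial Finset Function

namespace QBic

section LinearAlgebra

variable {k V W : Type*} [Field k] [AddCommGroup V] [Module k V] [AddCommGroup W] [Module k W]

theorem surjective_of_injective_of_finrank_eq [FiniteDimensional k V] [FiniteDimensional k W]
    {τ : k →+* k} (hτ : Surjective τ) (f : V →ₛₗ[τ] W) (hf : Injective f)
    (h : finrank k V = finrank k W) : Surjective f := by
  have : RingHomSurjective τ := ⟨hτ⟩
  let e := Module.finBasis k V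
  have hli : LinearIndependent k (f ∘ e) :=
    e.linearIndependent.map_of_surjective_injectiveₛ τ f.toAddMonoidHom hτ hf (map_smulₛₗ f)
  have hspan : Submodule.span k (Set.range (f ∘ e)) = ⊤ :=
    hli.span_eq_top_of_card_eq_finrank' (by simp [h])
  rw [← LinearMap.range_eq_top, eq_top_iff, ← hspan, Submodule.span_le]
  rintro _ ⟨i, rfl⟩
  exact LinearMap.mem_range_self f (e i)

theorem mem_span_singleton_of_ker_le {τ : k →+* k} (hτ : Surjective τ)
    (A : V →ₛₗ[τ] V →ₗ[k] k) (hA : Injective A) {v x : V}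
    (h : LinearMap.ker (A v) ≤ LinearMap.ker (A x)) : x ∈ k ∙ v := by
  have hspan : A x ∈ Submodule.span k (Set.range fun _ : Unit => A v) :=
    mem_span_of_iInf_ker_le_ker (by simpa using h)
  rw [Set.range_const, Submodule.mem_span_singleton] at hspan
  obtain ⟨c, hc⟩ := hspan
  obtain ⟨d, rfl⟩ := hτ c
  exact Submodule.mem_span_singleton.mpr ⟨d, hA (by rw [map_smulₛₗ, hc])⟩

theorem exists_disjoint_sup_eq_of_le {p q : Submodule k V} (h : p ≤ q) :
    ∃ r ≤ q, r ⊔ p = q ∧ Disjoint r p := by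
  obtain ⟨C, hC⟩ := p.exists_isCompl
  refine ⟨C ⊓ q, inf_le_right, ?_, hC.disjoint.symm.mono_left inf_le_left⟩
  rw [sup_comm, ← sup_inf_assoc_of_le C h, hC.sup_eq_top, top_inf_eq]

end LinearAlgebra

section Form

variable {k V : Type*} [Field k] [AddCommGroup V] [Module k V] {σ : k ≃+* k}

/-- Swapping the arguments of `B` and undoing `σ` gives a sesquilinear form again, so facts about
the left argument also apply to the right one. -/
def conjFlip (B : V →ₛₗ[(σ : k →+* k)] V →ₗ[k] k) : V →ₛₗ[(σ.symm : k →+* k)] V →ₗ[k] k :=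
  LinearMap.mk₂'ₛₗ _ _ (fun y x => σ.symm (B x y))
    (fun y y' x => by simp)
    (fun c y x => by simp)
    (fun y x x' => by simp)
    (fun c y x => by simp)

@[simp]
theorem conjFlip_apply (B : V →ₛₗ[(σ : k →+* k)] V →ₗ[k] k) (y x : V) :
    conjFlip B y x = σ.symm (B x y) := rfl

theorem injective_of_separatingLeft {B : V →ₛₗ[(σ : k →+* k)] V →ₗ[k] k}
    (hB : B.SeparatingLeft) : Injective B :=
  LinearMap.ker_eq_bot.mp (LinearMap.separatingLeft_iff_ker_eq_bot.mp hB)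

theorem injective_conjFlip {B : V →ₛₗ[(σ : k →+* k)] V →ₗ[k] k} (hB : B.SeparatingRight) :
    Injective (conjFlip B) := by
  rw [← LinearMap.ker_eq_bot, LinearMap.ker_eq_bot']
  intro y hy
  exact hB y fun x => by simpa using LinearMap.congr_fun hy x

theorem exists_twist [FiniteDimensional k V] (B : V →ₛₗ[(σ : k →+* k)] V →ₗ[k] k)
    (hB : B.Nondegenerate) :
    ∃ S : V →ₛₗ[(σ.trans σ : k →+* k)] V, Injective S ∧ ∀ v x, B x (S v) = σ (B v x) := by
  have hinj := injective_conjFlip hB.2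
  have hsurj : Surjective (conjFlip B) :=
    surjective_of_injective_of_finrank_eq σ.symm.surjective _ hinj Subspace.dual_finrank_eq.symm
  have hS : ∀ f, conjFlip B (surjInv hsurj f) = f := surjInv_eq hsurj
  let S : V →ₛₗ[(σ.trans σ : k →+* k)] V :=
    { toFun := fun v => surjInv hsurj (B v)
      map_add' := fun u v => hinj (by simp only [map_add, hS])
      map_smul' := fun c v => hinj (by simp [map_smulₛₗ, hS]) }
  refine ⟨S, fun u v huv => ?_, fun v x => ?_⟩
  · exact injective_of_separatingLeft hB.1
      (by rw [← hS (B u), ← hS (B v)]; exact congrArg (conjFlip B) huv)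
  · have := LinearMap.congr_fun (hS (B v)) x
    simp only [conjFlip_apply] at this
    rw [← this, RingEquiv.apply_symm_apply]
    rfl

end Form

section FixedPoint

variable {k V : Type*} [Field k] [AddCommGroup V] [Module k V]

/-- If `S (w i) = w (i + 1)` and `w (n + 1) = ∑ i ≤ n, c i • w i`, then a `Q`-power semilinear `S`
fixes `∑ i ≤ n, a i • w i` as soon as `a 0 = c 0 * t ^ Q` and
`a (i + 1) = a i ^ Q + c (i + 1) * t ^ Q`, where `t = a n`. These polynomials give each `a i` as a
function of `t`. -/
noncomputable def cyclicCoeffPoly (Q : ℕ) (c : ℕ → k) : ℕ → k[X]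
  | 0 => C (c 0) * X ^ Q
  | i + 1 => cyclicCoeffPoly Q c i ^ Q + C (c (i + 1)) * X ^ Q

variable {Q : ℕ} {c : ℕ → k}

theorem X_pow_dvd_cyclicCoeffPoly (hQ : Q ≠ 0) (i : ℕ) : X ^ Q ∣ cyclicCoeffPoly Q c i := by
  induction i with
  | zero => exact dvd_mul_left _ _
  | succ i ih => exact dvd_add (dvd_pow ih hQ) (dvd_mul_left _ _)

theorem natDegree_cyclicCoeffPoly (hQ : 2 ≤ Q) (hc : c 0 ≠ 0) (i : ℕ) :
    (cyclicCoeffPoly Q c i).natDegree = Q ^ (i + 1) := by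
  induction i with
  | zero => simpa [cyclicCoeffPoly] using natDegree_C_mul_X_pow Q (c 0) hc
  | succ i ih =>
    have hlt : Q < Q ^ (i + 2) := lt_self_pow₀ hQ (by omega)
    have hpow : (cyclicCoeffPoly Q c i ^ Q).natDegree = Q ^ (i + 2) := by
      rw [natDegree_pow, ih, ← pow_succ']
    rw [cyclicCoeffPoly, natDegree_add_eq_left_of_natDegree_lt, hpow]
    exact hpow ▸ (natDegree_C_mul_X_pow_le _ _).trans_lt hlt

theorem eval_cyclicCoeffPoly_zero (t : k) : (cyclicCoeffPoly Q c 0).eval t = c 0 * t ^ Q := by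
  simp [cyclicCoeffPoly]

theorem eval_cyclicCoeffPoly_succ (t : k) (i : ℕ) :
    (cyclicCoeffPoly Q c (i + 1)).eval t =
      (cyclicCoeffPoly Q c i).eval t ^ Q + c (i + 1) * t ^ Q := by
  simp [cyclicCoeffPoly]

theorem exists_ne_zero_eval_eq_self [IsAlgClosed k] {A : k[X]} (hA : X ^ 2 ∣ A) (hA0 : A ≠ 0) :
    ∃ t ≠ 0, A.eval t = t := by
  obtain ⟨B, rfl⟩ := hA
  have hB : B ≠ 0 := right_ne_zero_of_mul hA0
  have hpos : 0 < (X * B).degree :=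
    natDegree_pos_iff_degree_pos.mp (by rw [natDegree_X_mul hB]; omega)
  have hdeg : (X * B - C 1).degree ≠ 0 := by rw [degree_sub_C hpos]; exact hpos.ne'
  obtain ⟨t, ht⟩ := IsAlgClosed.exists_root _ hdeg
  have ht' : t * B.eval t = 1 := by simpa [sub_eq_zero] using ht
  refine ⟨t, left_ne_zero_of_mul_eq_one ht', ?_⟩
  simp only [eval_mul, eval_pow, eval_X]
  linear_combination t * ht'

theorem exists_first_mem_span_range [FiniteDimensional k V] (w : ℕ → V) :
    ∃ r, w r ∈ Submodule.span k (w '' ↑(range r)) ∧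
      ∀ j < r, w j ∉ Submodule.span k (w '' ↑(range j)) := by
  classical
  have hex : ∃ r, w r ∈ Submodule.span k (w '' ↑(range r)) := by
    let M : ℕ →o Submodule k V :=
      ⟨fun r => Submodule.span k (w '' ↑(range r)), fun i j hij =>
        Submodule.span_mono (Set.image_mono (by simpa using range_subset_range.mpr hij))⟩
    obtain ⟨r, hr⟩ := monotone_stabilizes_iff_noetherian.mpr inferInstance M
    have h : w r ∈ M (r + 1) := Submodule.subset_span ⟨r, by simp, rfl⟩
    rw [← hr (r + 1) r.le_succ] at h
    exact ⟨r, h⟩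
  exact ⟨Nat.find hex, Nat.find_spec hex, fun j hj => Nat.find_min hex hj⟩

section Cyclic

variable {τ : k →+* k} (S : V →ₛₗ[τ] V) {w : ℕ → V} (hw : ∀ i, S (w i) = w (i + 1)) {n : ℕ}
  (hc : ∑ i ∈ range (n + 1), c i • w i = w (n + 1))
include hw hc

theorem coeff_zero_ne_zero_of_cyclic (hτ : Surjective τ) (hS : Injective S)
    (hn : w n ∉ Submodule.span k (w '' ↑(range n))) : c 0 ≠ 0 := by
  intro h0
  choose d hd using hτ
  have hSn : S (∑ i ∈ range n, d (c (i + 1)) • w i) = S (w n) := by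
    simp only [map_sum, map_smulₛₗ, hd, hw]
    rw [← hc, sum_range_succ', h0, zero_smul, add_zero]
  exact hn ((Submodule.mem_span_image_finset_iff_exists_fun' k).mpr ⟨_, hS hSn⟩)

theorem apply_sum_eval_cyclicCoeffPoly_smul (hτ : ∀ x, τ x = x ^ Q) {t : k}
    (ht : (cyclicCoeffPoly Q c n).eval t = t) :
    S (∑ i ∈ range (n + 1), (cyclicCoeffPoly Q c i).eval t • w i) =
      ∑ i ∈ range (n + 1), (cyclicCoeffPoly Q c i).eval t • w i := by
  set a : ℕ → k := fun i => (cyclicCoeffPoly Q c i).eval t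
  have ha : a n = t := ht
  calc S (∑ i ∈ range (n + 1), a i • w i)
      = ∑ i ∈ range n, a i ^ Q • w (i + 1) + t ^ Q • w (n + 1) := by
        simp only [map_sum, map_smulₛₗ, hτ, hw]
        rw [sum_range_succ, ha]
    _ = ∑ i ∈ range n, a (i + 1) • w (i + 1) + a 0 • w 0 := by
        rw [← hc, sum_range_succ']
        simp only [a, eval_cyclicCoeffPoly_succ, eval_cyclicCoeffPoly_zero, add_smul, mul_smul,
          sum_add_distrib, smul_add, smul_sum, smul_comm (t ^ Q)]
        abel
    _ = ∑ i ∈ range (n + 1), a i • w i := (sum_range_succ' (fun i => a i • w i) n).symm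

end Cyclic

theorem exists_ne_zero_apply_eq_self [IsAlgClosed k] [FiniteDimensional k V] [Nontrivial V]
    {τ : k →+* k} (hQ : 2 ≤ Q) (hτ : ∀ x, τ x = x ^ Q) (S : V →ₛₗ[τ] V) (hS : Injective S) :
    ∃ v ≠ 0, S v = v := by
  obtain ⟨v₀, hv₀⟩ := exists_ne (0 : V)
  set w : ℕ → V := fun i => S^[i] v₀
  have hw : ∀ i, S (w i) = w (i + 1) := fun i => (iterate_succ_apply' S i v₀).symm
  obtain ⟨r, hr, hmin⟩ := exists_first_mem_span_range (k := k) w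
  obtain ⟨n, rfl⟩ : ∃ n, r = n + 1 := Nat.exists_eq_succ_of_ne_zero (by
    rintro rfl
    simp [w] at hr
    exact hv₀ hr)
  obtain ⟨c, hc⟩ := (Submodule.mem_span_image_finset_iff_exists_fun' k).mp hr
  have hn := hmin n n.lt_succ_self
  have hτs : Surjective τ := fun y =>
    (IsAlgClosed.exists_pow_nat_eq y (by omega : 0 < Q)).imp fun x hx => by rw [hτ, hx]
  have hc0 := coeff_zero_ne_zero_of_cyclic S hw hc hτs hS hn
  obtain ⟨t, ht0, ht⟩ := exists_ne_zero_eval_eq_self (A := cyclicCoeffPoly Q c n)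
    ((pow_dvd_pow X hQ).trans (X_pow_dvd_cyclicCoeffPoly (by omega) n))
    (ne_zero_of_natDegree_gt (n := 0) (by rw [natDegree_cyclicCoeffPoly hQ hc0]; positivity))
  refine ⟨_, fun h0 => hn ?_, apply_sum_eval_cyclicCoeffPoly_smul S hw hc hτ ht⟩
  -- the coefficient of `w n` is `t ≠ 0`, so a vanishing sum expresses `w n` by earlier iterates
  rw [sum_range_succ, ht, add_eq_zero_iff_neg_eq] at h0
  refine (Submodule.mem_span_image_finset_iff_exists_fun' k).mpr
    ⟨fun i => -t⁻¹ * (cyclicCoeffPoly Q c i).eval t, ?_⟩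
  rw [← inv_smul_smul₀ ht0 (w n), ← h0, smul_neg, smul_sum, ← sum_neg_distrib]
  exact sum_congr rfl fun i _ => by simp only [neg_mul, neg_smul, mul_smul]

end FixedPoint

section Hermitian

variable {k V : Type*} [Field k] [AddCommGroup V] [Module k V] {σ : k ≃+* k}
  (B : V →ₛₗ[(σ : k →+* k)] V →ₗ[k] k)

def IsHermitian (v : V) : Prop := ∀ x, B x v = σ (B v x)

variable {B}

theorem IsHermitian.smul_add {a : k} (ha : σ (σ a) = a) {u w : V} (hu : IsHermitian B u)
    (hw : IsHermitian B w) : IsHermitian B (a • u + w) := fun x => by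
  simp [hu x, hw x, ha]

theorem IsHermitian.of_domRestrict₁₂ {W : Submodule k V} {v₁ : V} (hv₁ : IsHermitian B v₁)
    (hW : W ≤ LinearMap.ker (B v₁)) (hsup : W ⊔ k ∙ v₁ = ⊤) {v : W}
    (hv : IsHermitian (B.domRestrict₁₂ W W) v) : IsHermitian B v := by
  intro x
  obtain ⟨y, hy, z, hz, rfl⟩ := Submodule.mem_sup.mp (hsup ▸ Submodule.mem_top : x ∈ W ⊔ k ∙ v₁)
  obtain ⟨c, rfl⟩ := Submodule.mem_span_singleton.mp hz
  have h₁ : B v₁ v = 0 := hW v.2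
  have h₂ : B v v₁ = 0 := by rw [hv₁ v, h₁, map_zero]
  have hy' : B y v = σ (B v y) := hv ⟨y, hy⟩
  simp [h₁, h₂, hy']

theorem nondegenerate_domRestrict₁₂ (hB : B.Nondegenerate) {v : V} (hv : IsHermitian B v)
    {W : Submodule k V} (hWv : W ≤ LinearMap.ker (B v))
    (hker : LinearMap.ker (B v) ≤ W ⊔ k ∙ v) (hdisj : Disjoint W (k ∙ v)) :
    (B.domRestrict₁₂ W W).Nondegenerate := by
  have hvW : ∀ x ∈ W, B v x = 0 := fun x hx => hWv hx
  have hdecomp : ∀ z ∈ LinearMap.ker (B v), ∃ y ∈ W, ∃ c : k, y + c • v = z := by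
    intro z hz
    obtain ⟨y, hy, z', hz', rfl⟩ := Submodule.mem_sup.mp (hker hz)
    obtain ⟨c, rfl⟩ := Submodule.mem_span_singleton.mp hz'
    exact ⟨y, hy, c, rfl⟩
  constructor
  · rintro ⟨x, hx⟩ h
    have hle : LinearMap.ker (B v) ≤ LinearMap.ker (B x) := by
      intro z hz
      obtain ⟨y, hy, c, rfl⟩ := hdecomp z hz
      have hxy : B x y = 0 := h ⟨y, hy⟩
      simp [hxy, hv x, hvW x hx]
    exact Subtype.ext (Submodule.disjoint_def.mp hdisj x hx
      (mem_span_singleton_of_ker_le σ.surjective B (injective_of_separatingLeft hB.1) hle))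
  · rintro ⟨x, hx⟩ h
    have hle : LinearMap.ker (conjFlip B v) ≤ LinearMap.ker (conjFlip B x) := by
      intro z hz
      have hz' : z ∈ LinearMap.ker (B v) := by simpa [hv z] using hz
      obtain ⟨y, hy, c, rfl⟩ := hdecomp z hz'
      have hyx : B y x = 0 := h ⟨y, hy⟩
      simp [hyx, hvW x hx]
    exact Subtype.ext (Submodule.disjoint_def.mp hdisj x hx
      (mem_span_singleton_of_ker_le σ.symm.surjective _ (injective_conjFlip hB.2) hle))

theorem exists_isHermitian [IsAlgClosed k] [FiniteDimensional k V] [Nontrivial V] {q : ℕ}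
    (hσ : ∀ x, σ x = x ^ q) (hq : 2 ≤ q) (hB : B.Nondegenerate) : ∃ v ≠ 0, IsHermitian B v := by
  obtain ⟨S, hSinj, hS⟩ := exists_twist B hB
  obtain ⟨v, hv0, hSv⟩ := exists_ne_zero_apply_eq_self (Q := q * q) (by nlinarith)
    (fun x => by simp [hσ, pow_mul]) S hSinj
  exact ⟨v, hv0, fun x => by simpa only [hSv] using hS v x⟩

theorem exists_mul_apply_eq [IsAlgClosed k] {q : ℕ} (hσ : ∀ x, σ x = x ^ q) {e : k}
    (he : e ≠ 0) (hσe : σ e = e) : ∃ a, a * σ a = e ∧ σ (σ a) = a := by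
  obtain ⟨a, ha⟩ := IsAlgClosed.exists_pow_nat_eq e q.succ_pos
  have hae : a * σ a = e := by rw [hσ, ← pow_succ', ha]
  have hσa : σ a ≠ 0 := by
    rintro h
    rw [h, mul_zero] at hae
    exact he hae.symm
  refine ⟨a, hae, mul_left_cancel₀ hσa ?_⟩
  calc σ a * σ (σ a) = σ (a * σ a) := (map_mul σ _ _).symm
    _ = σ a * a := by rw [hae, hσe, ← hae, mul_comm]

theorem exists_isotropic_smul_add [IsAlgClosed k] {q : ℕ} (hσ : ∀ x, σ x = x ^ q) {v₁ v₂ : V}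
    (hv₁ : IsHermitian B v₁) (hv₂ : IsHermitian B v₂) (h₁₂ : B v₁ v₂ = 0) (h₁ : B v₁ v₁ ≠ 0)
    (h₂ : B v₂ v₂ ≠ 0) : ∃ v ≠ 0, IsHermitian B v ∧ B v v = 0 := by
  have h₂₁ : B v₂ v₁ = 0 := by rw [hv₁ v₂, h₁₂, map_zero]
  obtain ⟨a, ha, haa⟩ := exists_mul_apply_eq hσ (e := -B v₂ v₂ / B v₁ v₁)
    (div_ne_zero (neg_ne_zero.mpr h₂) h₁) (by rw [map_div₀, map_neg, ← hv₁ v₁, ← hv₂ v₂])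
  have ha' : σ a * a * B v₁ v₁ = -B v₂ v₂ := by rw [mul_comm (σ a), ha, div_mul_cancel₀ _ h₁]
  have ha0 : a ≠ 0 := by
    rintro rfl
    simp only [map_zero, mul_zero, zero_mul, zero_eq_neg] at ha'
    exact h₂ ha'
  refine ⟨a • v₁ + v₂, fun h0 => ?_, hv₁.smul_add haa hv₂, ?_⟩
  · have := congrArg (B v₁) h0
    simp [h₁₂, ha0, h₁] at this
  · simp only [map_add, map_smulₛₗ, LinearMap.add_apply, LinearMap.smul_apply, smul_eq_mul,
      h₁₂, h₂₁, RingEquiv.coe_toRingHom]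
    linear_combination ha'

theorem exists_isHermitian_isotropic [IsAlgClosed k] [FiniteDimensional k V] {q : ℕ}
    (hσ : ∀ x, σ x = x ^ q) (hq : 2 ≤ q) (hB : B.Nondegenerate) (hV : 2 ≤ finrank k V) :
    ∃ v ≠ 0, IsHermitian B v ∧ B v v = 0 := by
  have : Nontrivial V := Module.nontrivial_of_finrank_pos (R := k) (by omega)
  obtain ⟨v₁, hv₁0, hv₁⟩ := exists_isHermitian hσ hq hB
  by_cases h₁ : B v₁ v₁ = 0
  · exact ⟨v₁, hv₁0, hv₁, h₁⟩
  have hBv₁ : B v₁ ≠ 0 := fun h => h₁ (by rw [h, LinearMap.zero_apply])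
  have hcompl : IsCompl (LinearMap.ker (B v₁)) (k ∙ v₁) :=
    Module.Dual.isCompl_ker_of_disjoint_of_ne_bot hBv₁
      ((Submodule.disjoint_span_singleton' hv₁0).mpr h₁) (by simpa using hv₁0)
  have hW := nondegenerate_domRestrict₁₂ hB hv₁ le_rfl (hcompl.sup_eq_top ▸ le_top)
    hcompl.disjoint
  have : Nontrivial (LinearMap.ker (B v₁)) := Module.nontrivial_of_finrank_pos (R := k) (by
    have := Module.Dual.finrank_ker_add_one_of_ne_zero hBv₁
    omega)
  obtain ⟨v₂, hv₂0, hv₂⟩ := exists_isHermitian hσ hq hW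
  have hv₂' := hv₁.of_domRestrict₁₂ le_rfl hcompl.sup_eq_top hv₂
  by_cases h₂ : B v₂ v₂ = 0
  · exact ⟨v₂, by simpa using hv₂0, hv₂', h₂⟩
  exact exists_isotropic_smul_add hσ hv₁ hv₂' v₂.2 h₁ h₂

end Hermitian

section TotallyIsotropic

variable {k V : Type*} [Field k] [AddCommGroup V] [Module k V] {σ : k ≃+* k}
  {B : V →ₛₗ[(σ : k →+* k)] V →ₗ[k] k}

def IsTotallyIsotropic (B : V →ₛₗ[(σ : k →+* k)] V →ₗ[k] k) (U : Submodule k V) : Prop :=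
  ∀ u ∈ U, ∀ u' ∈ U, B u u' = 0

theorem IsTotallyIsotropic.map_subtype {W : Submodule k V} {U : Submodule k W}
    (hU : IsTotallyIsotropic (B.domRestrict₁₂ W W) U) :
    IsTotallyIsotropic B (U.map W.subtype) := by
  rintro _ ⟨y, hy, rfl⟩ _ ⟨y', hy', rfl⟩
  exact hU y hy y' hy'

theorem IsTotallyIsotropic.sup_span_singleton {U : Submodule k V} (hU : IsTotallyIsotropic B U)
    {v : V} (hv : IsHermitian B v) (hvv : B v v = 0) (hUv : U ≤ LinearMap.ker (B v)) :
    IsTotallyIsotropic B (U ⊔ k ∙ v) := by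
  have hvU : ∀ u ∈ U, B v u = 0 := fun u hu => hUv hu
  have hUv' : ∀ u ∈ U, B u v = 0 := fun u hu => by rw [hv u, hvU u hu, map_zero]
  intro u hu u' hu'
  obtain ⟨y, hy, z, hz, rfl⟩ := Submodule.mem_sup.mp hu
  obtain ⟨y', hy', z', hz', rfl⟩ := Submodule.mem_sup.mp hu'
  obtain ⟨c, rfl⟩ := Submodule.mem_span_singleton.mp hz
  obtain ⟨c', rfl⟩ := Submodule.mem_span_singleton.mp hz'
  simp [hU y hy y' hy', hvU y' hy', hUv' y hy, hvv]

theorem exists_isTotallyIsotropic_finrank_eq_half [IsAlgClosed k] [FiniteDimensional k V]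
    {q : ℕ} (hσ : ∀ x, σ x = x ^ q) (hq : 2 ≤ q) (hB : B.Nondegenerate) :
    ∃ U : Submodule k V, finrank k U = finrank k V / 2 ∧ IsTotallyIsotropic B U := by
  induction hn : finrank k V using Nat.strong_induction_on generalizing V with
  | _ n ih =>
  by_cases hn2 : n < 2
  · exact ⟨⊥, by simp; omega, by simp [IsTotallyIsotropic]⟩
  obtain ⟨v, hv0, hv, hvv⟩ := exists_isHermitian_isotropic hσ hq hB (by omega)
  obtain ⟨W, hWv, hsup, hdisj⟩ :=
    exists_disjoint_sup_eq_of_le ((Submodule.span_singleton_le_iff_mem v _).mpr hvv :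
      k ∙ v ≤ LinearMap.ker (B v))
  have hWB := nondegenerate_domRestrict₁₂ hB hv hWv hsup.ge hdisj
  have hBv : B v ≠ 0 := fun h => hv0 (injective_of_separatingLeft hB.1 (by rw [h, map_zero]))
  have hWrank : finrank k W + 2 = n := by
    have hL := Module.Dual.finrank_ker_add_one_of_ne_zero hBv
    have hsum := Submodule.finrank_sup_add_finrank_inf_eq W (k ∙ v)
    rw [hsup, hdisj.eq_bot, finrank_bot, finrank_span_singleton hv0] at hsum
    omega
  obtain ⟨U, hU, hUiso⟩ := ih _ (by omega) hWB rfl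
  refine ⟨U.map W.subtype ⊔ k ∙ v, ?_, hUiso.map_subtype.sup_span_singleton hv hvv ?_⟩
  · have hUv : Disjoint (U.map W.subtype) (k ∙ v) :=
      hdisj.mono_left (Submodule.map_subtype_le W U)
    have := Submodule.finrank_sup_add_finrank_inf_eq (U.map W.subtype) (k ∙ v)
    rw [hUv.eq_bot, finrank_bot, finrank_span_singleton hv0,
      Submodule.finrank_map_subtype_eq] at this
    omega
  · exact (Submodule.map_subtype_le W U).trans hWv

end TotallyIsotropic

end QBic

/-- a nonsingular q-bic form on a (2m+2)-dimensional vector space over an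
algebraically closed field admits an (m+1)-dimensional totally isotropic subspace. -/
theorem stmt_4 {p q ν m : ℕ} [Fact p.Prime] (hν : 0 < ν) (hq : q = p ^ ν)
    {k : Type*} [Field k] [IsAlgClosed k] [CharP k p]
    {V : Type*} [AddCommGroup V] [Module k V] [FiniteDimensional k V]
    (hdim : Module.finrank k V = 2 * m + 2)
    (β : V → V → k)
    (haddl : ∀ u v w : V, β (u + v) w = β u w + β v w)
    (haddr : ∀ u v w : V, β u (v + w) = β u v + β u w)
    (hsmull : ∀ (c : k) (u v : V), β (c • u) v = c ^ q * β u v)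
    (hsmulr : ∀ (c : k) (u v : V), β u (c • v) = c * β u v)
    (hnsl : ∀ v : V, (∀ w : V, β v w = 0) → v = 0)
    (hnsr : ∀ w : V, (∀ v : V, β v w = 0) → w = 0) :
    ∃ U : Submodule k V, Module.finrank k U = m + 1 ∧
      ∀ u ∈ U, ∀ u' ∈ U, β u u' = 0 := by
  have hq2 : 2 ≤ q := hq ▸ (Fact.out : p.Prime).two_le.trans (Nat.le_self_pow hν.ne' p)
  let σ := iterateFrobeniusEquiv k p ν
  have hσ : ∀ x, σ x = x ^ q := fun x => by
    rw [hq, iterateFrobeniusEquiv_apply, iterateFrobenius_def]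
  let B : V →ₛₗ[(σ : k →+* k)] V →ₗ[k] k :=
    LinearMap.mk₂'ₛₗ _ _ β haddl (fun c u v => by simp [hsmull, hσ]) haddr hsmulr
  obtain ⟨U, hU, hUiso⟩ :=
    QBic.exists_isTotallyIsotropic_finrank_eq_half hσ hq2 (B := B) ⟨hnsl, hnsr⟩
  exact ⟨U, by omega, hUiso⟩
end

section
/- Let β be a q-bic form on V over k and X ⊂ P(V) the associated q-bic hypersurface. A first-order deformation of an isotropic subspace U ⊆ V, given by a linear map φ : U → V/U, keeps U isotropic over k[ε] if and only if φ factors through U^{[1],⊥}/U, where U^{[1],⊥} = {v ∈ V : β(u, v) = 0 for all u ∈ U}. Consequently, the tangent space of the Fano scheme of isotropic (r+1)-subspaces at [U] is isomorphic to Hom_k(U, U^{[1],⊥}/U). -/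
/-!
Since `ε ^ 2 = 0`, the deformed subspace is isotropic exactly when `β (u, φ̃ u') = 0` for all
`u, u' ∈ U`, i.e. when every `φ̃ u'` lies in `U^{[1],⊥}`. Because `U` is isotropic, membership in
`U^{[1],⊥}` depends only on the class modulo `U`, so this says that `φ` lands in `U^{[1],⊥} / U`.
-/

section IsotropicPairing

variable {R M N : Type*} [Ring R] [AddCommGroup M] [Module R M] [AddGroup N]
  {β : M → M → N} {U : Submodule R M}

theorem pairing_eq_of_sub_mem (haddr : ∀ u v w : M, β u (v + w) = β u v + β u w)
    (hiso : ∀ u ∈ U, ∀ v ∈ U, β u v = 0) {u v v' : M} (hu : u ∈ U) (hv : v - v' ∈ U) :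
    β u v = β u v' := by
  calc β u v = β u (v' + (v - v')) := by rw [add_sub_cancel]
    _ = β u v' := by rw [haddr, hiso u hu _ hv, add_zero]

end IsotropicPairing

theorem stmt_10_general
    {k : Type*} [Field k]
    {V : Type*} [AddCommGroup V] [Module k V]
    (β : V → V → k)
    (haddr : ∀ u v w : V, β u (v + w) = β u v + β u w)
    (U : Submodule k V)
    (hiso : ∀ u ∈ U, ∀ v ∈ U, β u v = 0)
    (φ : U →ₗ[k] V ⧸ U) (φt : U → V)
    (hlift : ∀ u : U, Submodule.Quotient.mk (φt u) = φ u) :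
    (∀ u u' : U, β (u : V) (φt u') = 0) ↔
      ∀ u : U, ∃ v : V, (∀ w ∈ U, β w v = 0) ∧ Submodule.Quotient.mk v = φ u := by
  refine ⟨fun h u => ⟨φt u, fun w hw => h ⟨w, hw⟩ u, hlift u⟩, fun h u u' => ?_⟩
  obtain ⟨v, hv, hvφ⟩ := h u'
  have hsub : φt u' - v ∈ U := by rw [← Submodule.Quotient.eq, hvφ, hlift]
  rw [pairing_eq_of_sub_mem haddr hiso u.2 hsub, hv u u.2]

/-- a first-order deformation of an isotropic subspace U of a q-bic form,
given by a linear map φ : U → V/U (with lift φ̃ : U → V), keeps U isotropic over k[ε]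
(equivalently, β(u, φ̃(u')) = 0 for all u, u' ∈ U, since ε^q = 0) if and only if φ factors
through U^{[1],⊥}/U, where U^{[1],⊥} = {v ∈ V : β(u, v) = 0 for all u ∈ U}.  This identifies
the tangent space of the Fano scheme at [U] with Hom(U, U^{[1],⊥}/U). -/
theorem stmt_10 {p q ν : ℕ} [Fact p.Prime] (hν : 0 < ν) (hq : q = p ^ ν)
    {k : Type*} [Field k] [CharP k p]
    (hcontains : Nonempty (GaloisField p (2 * ν) →+* k))
    {V : Type*} [AddCommGroup V] [Module k V] [FiniteDimensional k V]
    (β : V → V → k)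
    (haddl : ∀ u v w : V, β (u + v) w = β u w + β v w)
    (haddr : ∀ u v w : V, β u (v + w) = β u v + β u w)
    (hsmull : ∀ (c : k) (u v : V), β (c • u) v = c ^ q * β u v)
    (hsmulr : ∀ (c : k) (u v : V), β u (c • v) = c * β u v)
    (U : Submodule k V)
    (hiso : ∀ u ∈ U, ∀ v ∈ U, β u v = 0)
    (φ : U →ₗ[k] V ⧸ U) (φt : U → V)
    (hlift : ∀ u : U, Submodule.Quotient.mk (φt u) = φ u) :
    (∀ u u' : U, β (u : V) (φt u') = 0) ↔
      ∀ u : U, ∃ v : V, (∀ w ∈ U, β w v = 0) ∧ Submodule.Quotient.mk v = φ u :=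
  stmt_10_general β haddr U hiso φ φt hlift
end

section
/- Let β be a q-bic form on an (n+1)-dimensional vector space V over a field k containing F_{q²}. The q-bic hypersurface X = {β(v,v) = 0} ⊂ P^n is smooth over k if and only if β is nonsingular, if and only if the Gram matrix (β(e_i, e_j))_{i,j} with respect to any basis is invertible. -/
/-!
Write `c`, `d` for the coordinates of `v`, `w` in the basis and `c^q` for `c` with every entry
raised to the `q`-th power; then `β v w = (c^q ᵥ* A) ⬝ᵥ d`. So the right kernel of `β` is the
kernel of `A`, and the left kernel consists of the `c` with `c^q ᵥ* A = 0`, which is trivial when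
`det A ≠ 0` because `x ↦ x ^ q` has no nonzero zeros. Over the algebraic closure `x ↦ x ^ q` is
also surjective, so the partials `(x^q ᵥ* A)_j` have a common nonzero zero exactly when `A` has a
nonzero left null vector, i.e. when `det A = 0`.
-/

open Matrix

namespace Matrix

variable {ι K : Type*} [Fintype ι] [DecidableEq ι] [Field K]

theorem eq_zero_of_comp_vecMul_eq_zero {M : Matrix ι ι K} (hM : M.det ≠ 0) {g : K → K}
    (hg : ∀ a, g a = 0 → a = 0) {x : ι → K} (hx : (g ∘ x) ᵥ* M = 0) : x = 0 := by
  have hgx : g ∘ x = 0 := eq_zero_of_vecMul_eq_zero hM hx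
  exact funext fun i => hg _ (congr_fun hgx i)

theorem det_ne_zero_iff_forall_comp_vecMul_eq_zero {M : Matrix ι ι K} {g : K → K}
    (hg : Function.Surjective g) (hg0 : ∀ a, g a = 0 ↔ a = 0) :
    M.det ≠ 0 ↔ ∀ x : ι → K, (g ∘ x) ᵥ* M = 0 → x = 0 := by
  refine ⟨fun hM _ => eq_zero_of_comp_vecMul_eq_zero hM fun a => (hg0 a).mp, fun h hdet => ?_⟩
  obtain ⟨y, hy0, hy⟩ := exists_vecMul_eq_zero_iff.mpr hdet
  choose x hx using fun i => hg (y i)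
  have hgx : g ∘ x = y := funext hx
  have hx0 : x = 0 := h x (hgx ▸ hy)
  exact hy0 (funext fun i => by simp [← hx i, hx0, hg0])

theorem det_ne_zero_iff_forall_mulVec_eq_zero {M : Matrix ι ι K} :
    M.det ≠ 0 ↔ ∀ d : ι → K, M *ᵥ d = 0 → d = 0 := by
  refine ⟨fun hM _ => eq_zero_of_mulVec_eq_zero hM, fun h hdet => ?_⟩
  obtain ⟨d, hd0, hd⟩ := exists_mulVec_eq_zero_iff.mpr hdet
  exact hd0 (h d hd)

theorem isUnit_det_iff_forall_sum_algebraMap_mul_pow_eq_zero {k : Type*} [Field k]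
    [IsAlgClosed K] [Algebra k K] (A : Matrix ι ι k) {q : ℕ} (hq : 0 < q) :
    (∀ x : ι → K, (∀ j, ∑ i, algebraMap k K (A i j) * x i ^ q = 0) → x = 0) ↔
      IsUnit A.det := by
  have hdet : A.det ≠ 0 ↔ (A.map (algebraMap k K)).det ≠ 0 := by
    rw [← RingHom.mapMatrix_apply, ← RingHom.map_det, ne_eq, ne_eq,
      map_eq_zero_iff _ (algebraMap k K).injective]
  have hpow_surj : Function.Surjective fun a : K => a ^ q :=
    fun a => IsAlgClosed.exists_pow_nat_eq a hq
  rw [isUnit_iff_ne_zero, hdet,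
    det_ne_zero_iff_forall_comp_vecMul_eq_zero hpow_surj fun a => pow_eq_zero_iff hq.ne']
  refine forall_congr' fun x => imp_congr_left ?_
  simp only [funext_iff, vecMul, dotProduct, Function.comp_apply, map_apply, Pi.zero_apply,
    mul_comm]

end Matrix

section SemilinearForm

variable {k V ι : Type*} [Field k] [AddCommGroup V] [Module k V]

noncomputable def gramMatrix (β : V → V → k) (b : Module.Basis ι k V) : Matrix ι ι k :=
  Matrix.of fun i j => β (b i) (b j)

theorem apply_sum_smul_left {β : V → V → k} {σ : k → k}
    (haddl : ∀ u v w : V, β (u + v) w = β u w + β v w)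
    (hsmull : ∀ (c : k) (u v : V), β (c • u) v = σ c * β u v)
    (s : Finset ι) (c : ι → k) (u : ι → V) (w : V) :
    β (∑ i ∈ s, c i • u i) w = ∑ i ∈ s, σ (c i) * β (u i) w :=
  (map_sum (AddMonoidHom.mk' (β · w) (haddl · · w)) _ s).trans
    (Finset.sum_congr rfl fun _ _ => hsmull _ _ _)

theorem apply_sum_smul_right {β : V → V → k}
    (haddr : ∀ u v w : V, β u (v + w) = β u v + β u w)
    (hsmulr : ∀ (c : k) (u v : V), β u (c • v) = c * β u v)
    (s : Finset ι) (d : ι → k) (u : ι → V) (v : V) :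
    β v (∑ j ∈ s, d j • u j) = ∑ j ∈ s, d j * β v (u j) :=
  (map_sum (AddMonoidHom.mk' (β v) (haddr v)) _ s).trans
    (Finset.sum_congr rfl fun _ _ => hsmulr _ _ _)

variable [Fintype ι]

theorem apply_basis_right_eq_vecMul {β : V → V → k} {σ : k → k}
    (haddl : ∀ u v w : V, β (u + v) w = β u w + β v w)
    (hsmull : ∀ (c : k) (u v : V), β (c • u) v = σ c * β u v)
    (b : Module.Basis ι k V) (v : V) (j : ι) :
    β v (b j) = ((σ ∘ b.repr v) ᵥ* gramMatrix β b) j := by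
  conv_lhs => rw [← b.sum_repr v, apply_sum_smul_left haddl hsmull]
  rfl

theorem apply_basis_left_eq_mulVec {β : V → V → k}
    (haddr : ∀ u v w : V, β u (v + w) = β u v + β u w)
    (hsmulr : ∀ (c : k) (u v : V), β u (c • v) = c * β u v)
    (b : Module.Basis ι k V) (i : ι) (w : V) :
    β (b i) w = (gramMatrix β b *ᵥ b.repr w) i := by
  conv_lhs => rw [← b.sum_repr w, apply_sum_smul_right haddr hsmulr]
  simp only [mulVec, dotProduct, gramMatrix, of_apply, mul_comm]

theorem forall_apply_eq_zero_iff_vecMul_eq_zero {β : V → V → k} {σ : k → k}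
    (haddl : ∀ u v w : V, β (u + v) w = β u w + β v w)
    (haddr : ∀ u v w : V, β u (v + w) = β u v + β u w)
    (hsmull : ∀ (c : k) (u v : V), β (c • u) v = σ c * β u v)
    (hsmulr : ∀ (c : k) (u v : V), β u (c • v) = c * β u v)
    (b : Module.Basis ι k V) (v : V) :
    (∀ w, β v w = 0) ↔ (σ ∘ b.repr v) ᵥ* gramMatrix β b = 0 := by
  simp only [funext_iff, Pi.zero_apply, ← apply_basis_right_eq_vecMul haddl hsmull]
  refine ⟨fun h j => h (b j), fun h w => ?_⟩
  rw [← b.sum_repr w, apply_sum_smul_right haddr hsmulr]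
  simp [h]

theorem forall_apply_eq_zero_iff_mulVec_eq_zero {β : V → V → k} {σ : k → k}
    (haddl : ∀ u v w : V, β (u + v) w = β u w + β v w)
    (haddr : ∀ u v w : V, β u (v + w) = β u v + β u w)
    (hsmull : ∀ (c : k) (u v : V), β (c • u) v = σ c * β u v)
    (hsmulr : ∀ (c : k) (u v : V), β u (c • v) = c * β u v)
    (b : Module.Basis ι k V) (w : V) :
    (∀ v, β v w = 0) ↔ gramMatrix β b *ᵥ b.repr w = 0 := by
  simp only [funext_iff, Pi.zero_apply, ← apply_basis_left_eq_mulVec haddr hsmulr]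
  refine ⟨fun h i => h (b i), fun h v => ?_⟩
  rw [← b.sum_repr v, apply_sum_smul_left haddl hsmull]
  simp [h]

theorem isUnit_det_gramMatrix_iff [DecidableEq ι] {β : V → V → k} {σ : k → k}
    (haddl : ∀ u v w : V, β (u + v) w = β u w + β v w)
    (haddr : ∀ u v w : V, β u (v + w) = β u v + β u w)
    (hsmull : ∀ (c : k) (u v : V), β (c • u) v = σ c * β u v)
    (hsmulr : ∀ (c : k) (u v : V), β u (c • v) = c * β u v)
    (hσ : ∀ a, σ a = 0 → a = 0) (b : Module.Basis ι k V) :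
    IsUnit (gramMatrix β b).det ↔
      (∀ v : V, (∀ w : V, β v w = 0) → v = 0) ∧ (∀ w : V, (∀ v : V, β v w = 0) → w = 0) := by
  have hright : (∀ w : V, (∀ v : V, β v w = 0) → w = 0) ↔ (gramMatrix β b).det ≠ 0 := by
    simp only [det_ne_zero_iff_forall_mulVec_eq_zero,
      forall_apply_eq_zero_iff_mulVec_eq_zero haddl haddr hsmull hsmulr b,
      ← b.equivFun.map_eq_zero_iff (x := _)]
    exact b.equivFun.toEquiv.forall_congr_right (q := fun d => gramMatrix β b *ᵥ d = 0 → d = 0)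
  have hleft (hdet : (gramMatrix β b).det ≠ 0) (v : V) (hv : ∀ w, β v w = 0) : v = 0 :=
    b.equivFun.map_eq_zero_iff.mp <| eq_zero_of_comp_vecMul_eq_zero hdet hσ <|
      (forall_apply_eq_zero_iff_vecMul_eq_zero haddl haddr hsmull hsmulr b v).mp hv
  rw [isUnit_iff_ne_zero]
  exact ⟨fun hdet => ⟨hleft hdet, hright.mpr hdet⟩, fun h => hright.mp h.2⟩

end SemilinearForm

theorem stmt_11_general {p q ν n : ℕ} [Fact p.Prime] (hq : q = p ^ ν)
    {k : Type*} [Field k]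
    {V : Type*} [AddCommGroup V] [Module k V]
    (b : Module.Basis (Fin (n + 1)) k V)
    (β : V → V → k)
    (haddl : ∀ u v w : V, β (u + v) w = β u w + β v w)
    (haddr : ∀ u v w : V, β u (v + w) = β u v + β u w)
    (hsmull : ∀ (c : k) (u v : V), β (c • u) v = c ^ q * β u v)
    (hsmulr : ∀ (c : k) (u v : V), β u (c • v) = c * β u v)
    (A : Matrix (Fin (n + 1)) (Fin (n + 1)) k)
    (hA : ∀ i j, A i j = β (b i) (b j)) :
    ((∀ x : Fin (n + 1) → AlgebraicClosure k,
        (∀ j, ∑ i, algebraMap k (AlgebraicClosure k) (A i j) * (x i) ^ q = 0) → x = 0)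
      ↔ IsUnit A.det) ∧
    (IsUnit A.det ↔
      ((∀ v : V, (∀ w : V, β v w = 0) → v = 0) ∧
        (∀ w : V, (∀ v : V, β v w = 0) → w = 0))) := by
  have hq0 : 0 < q := hq ▸ pow_pos (Fact.out : p.Prime).pos ν
  have hAβ : A = gramMatrix β b := Matrix.ext hA
  refine ⟨isUnit_det_iff_forall_sum_algebraMap_mul_pow_eq_zero A hq0, ?_⟩
  rw [hAβ]
  exact isUnit_det_gramMatrix_iff haddl haddr hsmull hsmulr
    (fun a => (pow_eq_zero_iff hq0.ne').mp) b

/-- the q-bic hypersurface X ⊂ Pⁿ attached to a q-bic form β on an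
(n+1)-dimensional k-vector space is smooth over k (Jacobian criterion: the partial derivatives
`Σ_i a_{ij} x_i^q` have no common nonzero zero over the algebraic closure) if and only if
β is nonsingular, if and only if the Gram matrix is invertible. -/
theorem stmt_11 {p q ν n : ℕ} [Fact p.Prime] (hν : 0 < ν) (hq : q = p ^ ν)
    {k : Type*} [Field k] [CharP k p]
    (hcontains : Nonempty (GaloisField p (2 * ν) →+* k))
    {V : Type*} [AddCommGroup V] [Module k V] [FiniteDimensional k V]
    (b : Module.Basis (Fin (n + 1)) k V)
    (β : V → V → k)
    (haddl : ∀ u v w : V, β (u + v) w = β u w + β v w)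
    (haddr : ∀ u v w : V, β u (v + w) = β u v + β u w)
    (hsmull : ∀ (c : k) (u v : V), β (c • u) v = c ^ q * β u v)
    (hsmulr : ∀ (c : k) (u v : V), β u (c • v) = c * β u v)
    (A : Matrix (Fin (n + 1)) (Fin (n + 1)) k)
    (hA : ∀ i j, A i j = β (b i) (b j)) :
    ((∀ x : Fin (n + 1) → AlgebraicClosure k,
        (∀ j, ∑ i, algebraMap k (AlgebraicClosure k) (A i j) * (x i) ^ q = 0) → x = 0)
      ↔ IsUnit A.det) ∧
    (IsUnit A.det ↔
      ((∀ v : V, (∀ w : V, β v w = 0) → v = 0) ∧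
        (∀ w : V, (∀ v : V, β v w = 0) → w = 0))) :=
  stmt_11_general hq b β haddl haddr hsmull hsmulr A hA
end

section
/- Let β be a nonsingular q-bic form on a (2r+2)-dimensional vector space V over a field k ⊇ F_{q²}, with canonical Frobenius φ, and let U ⊂ V be an (r+1)-dimensional isotropic subspace. Then U is Hermitian (φ(U) = U). That is, every maximal isotropic subspace of a nonsingular q-bic form on an even-dimensional space is automatically Hermitian. -/
open Module Submodule Matrix

section aux

variable {k : Type*} [Field k] {p ν : ℕ} [Fact p.Prime] [CharP k p] {n : ℕ}

/-- Entrywise Frobenius preserves linear independence in `k^n`. -/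
lemma frobLI {s : ℕ} {v : Fin s → (Fin n → k)} (hv : LinearIndependent k v) :
    LinearIndependent k (fun i (j : Fin n) => v i j ^ p ^ ν) := by
  classical
  haveI : ExpChar k p := .prime Fact.out
  obtain ⟨C, hC⟩ := (span k (Set.range v)).exists_isCompl
  set t := finrank k C with ht
  let w := finBasis k C
  have hwLI : LinearIndependent k (fun i : Fin t => (w i : Fin n → k)) :=
    w.linearIndependent.map' C.subtype (ker_subtype C)
  have hwspan : span k (Set.range fun i : Fin t => (w i : Fin n → k)) = C := by
    have h1 : Set.range (fun i : Fin t => (w i : Fin n → k)) = C.subtype '' Set.range w := by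
      rw [← Set.range_comp]; rfl
    rw [h1, ← Submodule.map_span, w.span_eq, Submodule.map_top, range_subtype]
  have hELI : LinearIndependent k (Sum.elim v fun i : Fin t => (w i : Fin n → k)) :=
    hv.sum_type hwLI (by rw [hwspan]; exact hC.disjoint)
  have hEspan : ⊤ ≤ span k (Set.range (Sum.elim v fun i : Fin t => (w i : Fin n → k))) := by
    rw [Set.Sum.elim_range, Submodule.span_union, hwspan, hC.sup_eq_top]
  let Eb : Basis (Fin s ⊕ Fin t) k (Fin n → k) := Basis.mk hELI hEspan
  have hn : n = s + t := by
    have h1 := Module.finrank_eq_card_basis Eb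
    rw [Module.finrank_fin_fun] at h1
    simpa using h1
  let e : (Fin s ⊕ Fin t) ≃ Fin n := finSumFinEquiv.trans (finCongr hn.symm)
  let Eb' := Eb.reindex e
  let M0 := (Pi.basisFun k (Fin n)).toMatrix Eb'
  haveI := (Pi.basisFun k (Fin n)).invertibleToMatrix Eb'
  have hdet : IsUnit M0.det := Matrix.isUnit_det_of_invertible M0
  let σ := iterateFrobenius k p ν
  let M1 := M0.map σ
  have hdet1 : IsUnit M1.det := by
    have : σ M0.det = M1.det := RingHom.map_det σ M0
    rw [← this]
    exact isUnit_iff_ne_zero.mpr (by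
      simp only [ne_eq, map_eq_zero]
      exact hdet.ne_zero)
  have hker : LinearMap.ker M1.mulVecLin = ⊥ := by
    rw [LinearMap.ker_eq_bot']
    intro x hx
    have hx' : M1 *ᵥ x = 0 := hx
    have h2 : M1⁻¹ *ᵥ (M1 *ᵥ x) = x := by
      rw [Matrix.mulVec_mulVec, Matrix.nonsing_inv_mul _ hdet1, Matrix.one_mulVec]
    rw [← h2, hx', Matrix.mulVec_zero]
  have hcols : LinearIndependent k fun j : Fin n => M1 *ᵥ Pi.single j (1 : k) := by
    have h2 := (Pi.basisFun k (Fin n)).linearIndependent.map' M1.mulVecLin hker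
    have h3 : (fun j : Fin n => M1 *ᵥ Pi.single j (1 : k)) =
        M1.mulVecLin ∘ (Pi.basisFun k (Fin n)) := by
      funext j
      simp [Matrix.mulVecLin_apply, Pi.basisFun_apply]
    rw [h3]; exact h2
  have hfinal : (fun i (j : Fin n) => v i j ^ p ^ ν) =
      (fun l : Fin n => M1 *ᵥ Pi.single l (1 : k)) ∘ (fun i => e (Sum.inl i)) := by
    funext i
    have hEb' : Eb' (e (Sum.inl i)) = v i := by
      simp only [Eb', Basis.reindex_apply, Equiv.symm_apply_apply]
      rw [show Eb (Sum.inl i) = Sum.elim v (fun i : Fin t => (w i : Fin n → k)) (Sum.inl i) from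
        Basis.mk_apply hELI hEspan _]
      rfl
    funext j
    simp only [Function.comp_apply, Matrix.mulVec_single_one]
    have : M1 j (e (Sum.inl i)) = σ (M0 j (e (Sum.inl i))) := rfl
    have hM0 : M0 j (e (Sum.inl i)) = Eb' (e (Sum.inl i)) j := by
      rw [show M0 j (e (Sum.inl i)) = (Pi.basisFun k (Fin n)).repr (Eb' (e (Sum.inl i))) j from
        Basis.toMatrix_apply _ _ _ _, Pi.basisFun_repr]
    show v i j ^ p ^ ν = M1 j (e (Sum.inl i))
    rw [this, hM0, hEb']
    rfl
  rw [hfinal]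
  exact hcols.comp _ (e.injective.comp Sum.inl_injective)

/-- Entrywise Frobenius preserves the dimension of the span of the image of a subspace. -/
lemma frobSpan (S : Submodule k (Fin n → k)) :
    finrank k (span k ((fun a : Fin n → k => fun j => a j ^ p ^ ν) '' S)) = finrank k S := by
  classical
  haveI : ExpChar k p := .prime Fact.out
  set Fr : (Fin n → k) → (Fin n → k) := fun a j => a j ^ p ^ ν with hFr
  set s := finrank k S with hs
  let w := finBasis k S
  have hvLI : LinearIndependent k (fun i : Fin s => (w i : Fin n → k)) :=
    w.linearIndependent.map' S.subtype (ker_subtype S)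
  have hvspan : span k (Set.range fun i : Fin s => (w i : Fin n → k)) = S := by
    have h1 : Set.range (fun i : Fin s => (w i : Fin n → k)) = S.subtype '' Set.range w := by
      rw [← Set.range_comp]; rfl
    rw [h1, ← Submodule.map_span, w.span_eq, Submodule.map_top, range_subtype]
  have hFrLI : LinearIndependent k (fun i : Fin s => Fr ((w i : Fin n → k))) := frobLI hvLI
  have key : span k (Fr '' S) = span k (Set.range fun i : Fin s => Fr ((w i : Fin n → k))) := by
    apply le_antisymm
    · rw [Submodule.span_le]
      rintro _ ⟨a, ha, rfl⟩
      have ha' : a ∈ span k (Set.range fun i : Fin s => ((w i : Fin n → k))) := by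
        rw [hvspan]; exact ha
      clear ha
      induction ha' using span_induction with
      | mem x h =>
          obtain ⟨i, rfl⟩ := h
          exact subset_span ⟨i, rfl⟩
      | zero =>
          have : Fr 0 = 0 := by
            funext j
            simp [hFr, zero_pow, pow_ne_zero, (Fact.out : p.Prime).ne_zero]
          rw [SetLike.mem_coe, this]; exact zero_mem _
      | add x y hx hy ihx ihy =>
          have : Fr (x + y) = Fr x + Fr y := by
            funext j; simp only [hFr, Pi.add_apply]; exact add_pow_char_pow (x j) (y j) p ν
          rw [SetLike.mem_coe, this]; exact add_mem ihx ihy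
      | smul c x hx ihx =>
          have : Fr (c • x) = c ^ p ^ ν • Fr x := by
            funext j; simp [hFr, mul_pow]
          rw [SetLike.mem_coe, this]; exact smul_mem _ _ ihx
    · rw [Submodule.span_le]
      rintro _ ⟨i, rfl⟩
      exact subset_span ⟨(w i : Fin n → k), (w i).2, rfl⟩
  rw [key, finrank_span_eq_card hFrLI, Fintype.card_fin]

end aux

/-- every maximal (half-dimensional) isotropic subspace of a nonsingular q-bic
form on a (2r+2)-dimensional vector space is Hermitian, i.e. stable under the canonical
q²-semilinear Frobenius φ. -/
theorem stmt_19 {p q ν r : ℕ} [Fact p.Prime] (hν : 0 < ν) (hq : q = p ^ ν)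
    {k : Type*} [Field k] [CharP k p]
    (hcontains : Nonempty (GaloisField p (2 * ν) →+* k))
    {V : Type*} [AddCommGroup V] [Module k V] [FiniteDimensional k V]
    (hdim : Module.finrank k V = 2 * r + 2)
    (β : V → V → k)
    (haddl : ∀ u v w : V, β (u + v) w = β u w + β v w)
    (haddr : ∀ u v w : V, β u (v + w) = β u v + β u w)
    (hsmull : ∀ (c : k) (u v : V), β (c • u) v = c ^ q * β u v)
    (hsmulr : ∀ (c : k) (u v : V), β u (c • v) = c * β u v)
    (hnsl : ∀ v : V, (∀ w : V, β v w = 0) → v = 0)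
    (hnsr : ∀ w : V, (∀ v : V, β v w = 0) → w = 0)
    (φ : V → V)
    (hφ : ∀ v w : V, β w (φ v) = (β v w) ^ q)
    (hφbij : Function.Bijective φ)
    (U : Submodule k V)
    (hU : Module.finrank k U = r + 1)
    (hiso : ∀ u ∈ U, ∀ v ∈ U, β u v = 0) :
    φ '' (U : Set V) = (U : Set V) := by
  classical
  subst hq
  have hq0 : p ^ ν ≠ 0 := pow_ne_zero ν (Fact.out : p.Prime).ne_zero
  -- β vanishes when either argument is zero
  have hzerol : ∀ w : V, β 0 w = 0 := by
    intro w
    calc β 0 w = β ((0 : k) • w) w := by rw [zero_smul]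
    _ = (0 : k) ^ p ^ ν * β w w := hsmull 0 w w
    _ = 0 := by rw [zero_pow hq0, zero_mul]
  -- the q-semilinear map to the dual space
  let f : V → Module.Dual k V := fun u =>
    { toFun := β u
      map_add' := haddr u
      map_smul' := fun c v => by simpa using hsmulr c u v }
  have hfapply : ∀ u w, f u w = β u w := fun _ _ => rfl
  let fH : V →+ Module.Dual k V :=
    AddMonoidHom.mk' f (fun u v => by ext w; exact haddl u v w)
  have hfsmul : ∀ (c : k) (u : V), f (c • u) = c ^ p ^ ν • f u := by
    intro c u; ext w
    simpa [hfapply] using hsmull c u w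
  -- a basis of V
  let b : Basis (Fin (2 * r + 2)) k V := Module.finBasisOfFinrankEq k V hdim
  -- expansion of f in terms of basis values
  have hexp : ∀ u : V, f u = ∑ j, (b.repr u j) ^ p ^ ν • f (b j) := by
    intro u
    conv_lhs => rw [show f u = fH u from rfl, ← b.sum_repr u, map_sum]
    exact Finset.sum_congr rfl fun j _ => hfsmul _ _
  -- the span of the image of f is everything
  have hspan_top : Submodule.span k (Set.range f) = ⊤ := by
    have h1 : (Submodule.span k (Set.range f)).dualCoannihilator = ⊥ := by
      rw [eq_bot_iff]
      intro w hw
      rw [Submodule.mem_dualCoannihilator] at hw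
      exact hnsr w (fun v => hw (f v) (Submodule.subset_span ⟨v, rfl⟩))
    have h2 := Subspace.finrank_add_finrank_dualCoannihilator_eq
      (Submodule.span k (Set.range f))
    rw [h1, finrank_bot, add_zero] at h2
    apply Submodule.eq_top_of_finrank_eq
    rw [h2, Subspace.dual_finrank_eq]
  -- the dual basis made from f applied to basis vectors
  have hFcard : Fintype.card (Fin (2 * r + 2)) = finrank k (Module.Dual k V) := by
    rw [Subspace.dual_finrank_eq, hdim, Fintype.card_fin]
  have hFge : ⊤ ≤ Submodule.span k (Set.range (f ∘ b)) := by
    rw [← hspan_top, Submodule.span_le]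
    rintro _ ⟨u, rfl⟩
    rw [SetLike.mem_coe, hexp u]
    exact Submodule.sum_mem _ fun j _ =>
      Submodule.smul_mem _ _ (Submodule.subset_span ⟨j, rfl⟩)
  let G : Basis (Fin (2 * r + 2)) k (Module.Dual k V) :=
    basisOfTopLeSpanOfCardEqFinrank (f ∘ b) hFge hFcard
  have hG : ⇑G = f ∘ b := coe_basisOfTopLeSpanOfCardEqFinrank _ _ _
  -- the entrywise Frobenius on coordinates
  set Fr : (Fin (2 * r + 2) → k) → (Fin (2 * r + 2) → k) := fun a j => a j ^ p ^ ν with hFr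
  -- coordinates of f u with respect to G are the Frobenius of coordinates of u
  have hcoord : ∀ u : V, G.equivFun (f u) = Fr (b.equivFun u) := by
    intro u
    funext l
    rw [hexp u, map_sum, Finset.sum_apply]
    have h3 : ∀ j, (G.equivFun ((b.repr u j) ^ p ^ ν • f (b j))) l
        = (b.repr u j) ^ p ^ ν * (if j = l then 1 else 0) := by
      intro j
      have h4 : f (b j) = G j := by rw [hG]; rfl
      rw [h4, _root_.map_smul, Pi.smul_apply, Basis.equivFun_self, smul_eq_mul]
    simp only [h3, mul_ite, mul_one, mul_zero]
    rw [Finset.sum_ite_eq' Finset.univ l fun j => (b.repr u j) ^ p ^ ν]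
    simp [hFr, Basis.equivFun_apply]
  -- the coordinate image of U
  let Uc : Submodule k (Fin (2 * r + 2) → k) := U.map b.equivFun.toLinearMap
  have hUc : finrank k Uc = r + 1 := by
    rw [LinearEquiv.finrank_map_eq b.equivFun U, hU]
  -- the span of f '' U in the dual
  let T : Submodule k (Module.Dual k V) := Submodule.span k (f '' ↑U)
  have hTmap : T.map G.equivFun.toLinearMap = Submodule.span k (Fr '' ↑Uc) := by
    rw [Submodule.map_span]
    congr 1
    rw [← Set.image_comp]
    have h5 : ↑Uc = b.equivFun '' ↑U := by
      ext x; simp [Uc, Submodule.map_coe]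
    rw [h5, ← Set.image_comp]
    exact Set.image_congr fun u _ => hcoord u
  have hT : finrank k T = r + 1 := by
    have h6 := LinearEquiv.finrank_map_eq G.equivFun T
    rw [hTmap] at h6
    rw [← h6, frobSpan Uc, hUc]
  -- W = dual coannihilator of T equals U
  set W := T.dualCoannihilator with hWdef
  have hWrank : finrank k W = r + 1 := by
    have h7 := Subspace.finrank_add_finrank_dualCoannihilator_eq T
    rw [hT, hdim, ← hWdef] at h7
    omega
  have hmemW : ∀ x : V, x ∈ W ↔ ∀ u ∈ U, β u x = 0 := by
    intro x
    rw [hWdef, Submodule.mem_dualCoannihilator]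
    constructor
    · intro h u hu
      exact h (f u) (Submodule.subset_span ⟨u, hu, rfl⟩)
    · intro h ψ hψ
      induction hψ using Submodule.span_induction with
      | mem ψ hmem => obtain ⟨u, hu, rfl⟩ := hmem; exact h u hu
      | zero => simp
      | add ψ₁ ψ₂ h1 h2 ih1 ih2 => simp [ih1, ih2]
      | smul c ψ h1 ih => simp [ih]
  have hUW : U = W := by
    apply Submodule.eq_of_le_of_finrank_eq
    · intro u hu
      rw [hmemW]
      exact fun u' hu' => hiso u' hu' u hu
    · rw [hU, hWrank]
  -- forward inclusion: φ(U) ⊆ U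
  have hfwd : φ '' (U : Set V) ⊆ (U : Set V) := by
    rintro _ ⟨u, hu, rfl⟩
    rw [SetLike.mem_coe, hUW, hmemW]
    intro u' hu'
    rw [hφ u u', hiso u hu u' hu', zero_pow hq0]
  -- the left-orthogonal subspace P of U
  let P : Submodule k V :=
    { carrier := {v | ∀ u ∈ U, β v u = 0}
      add_mem' := fun {a c} ha hc u hu => by rw [haddl, ha u hu, hc u hu, add_zero]
      zero_mem' := fun u hu => hzerol u
      smul_mem' := fun c v hv u hu => by rw [hsmull, hv u hu, mul_zero] }
  have hmemP : ∀ v : V, v ∈ P ↔ ∀ u ∈ U, β v u = 0 := fun _ => Iff.rfl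
  -- the dual annihilator of U
  let D := U.dualAnnihilator
  have hD : finrank k D = r + 1 := by
    have h8 : finrank k (V ⧸ U) = finrank k D :=
      LinearEquiv.finrank_eq (Subspace.quotEquivAnnihilator U)
    have h9 := Submodule.finrank_quotient_add_finrank U
    rw [hdim, hU] at h9
    omega
  have hPD : ∀ v ∈ P, f v ∈ D := by
    intro v hv
    rw [Submodule.mem_dualAnnihilator]
    exact fun u hu => hv u hu
  -- coordinate images
  let Pc : Submodule k (Fin (2 * r + 2) → k) := P.map b.equivFun.toLinearMap
  let Dc : Submodule k (Fin (2 * r + 2) → k) := D.map G.equivFun.toLinearMap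
  have hDc : finrank k Dc = r + 1 := by
    rw [LinearEquiv.finrank_map_eq G.equivFun D, hD]
  have hsub : Fr '' ↑Pc ⊆ ↑Dc := by
    rintro _ ⟨x, hx, rfl⟩
    obtain ⟨v, hv, rfl⟩ := hx
    have : Fr (b.equivFun.toLinearMap v) = G.equivFun.toLinearMap (f v) :=
      (hcoord v).symm
    rw [this]
    exact ⟨f v, hPD v hv, rfl⟩
  have hPrank : finrank k P ≤ r + 1 := by
    have h10 : finrank k Pc = finrank k P := LinearEquiv.finrank_map_eq b.equivFun P
    have h11 : Submodule.span k (Fr '' ↑Pc) ≤ Dc := Submodule.span_le.mpr hsub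
    have h12 := Submodule.finrank_mono h11
    rw [frobSpan Pc, h10, hDc] at h12
    exact h12
  have hUP : U = P := by
    apply Submodule.eq_of_le_of_finrank_le
    · intro u hu
      rw [hmemP]
      exact fun u' hu' => hiso u hu u' hu'
    · rw [hU]; exact hPrank
  -- backward inclusion: U ⊆ φ(U)
  have hbwd : (U : Set V) ⊆ φ '' (U : Set V) := by
    intro u hu
    obtain ⟨x, rfl⟩ := hφbij.surjective u
    refine ⟨x, ?_, rfl⟩
    rw [SetLike.mem_coe, hUP, hmemP]
    intro u' hu'
    have h13 : (β x u') ^ p ^ ν = 0 := by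
      rw [← hφ x u']
      exact hiso u' hu' _ hu
    exact pow_eq_zero_iff hq0 |>.mp h13
  exact Set.Subset.antisymm hfwd hbwd
end
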